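/- If A is a Nelson-type algebra, then the term function τ(x) = (x∧e)² is a Nelson conucleus on A. Conversely, if A is an involutive residuated lattice and τ is a Nelson conucleus on A satisfying τ(x)² = τ(x) ≤ e for all x, then τ(x) = (x∧e)² for all x and A is a Nelson-type algebra (in particular, A is commutative and distributive and the conucleus image A_τ is a Brouwerian algebra, i.e. an integral residuated lattice in which · and ∧_τ coincide). -/
import Mathlib


/-- A residuated lattice: a lattice with a monoid operation and residuals
`ldiv x z` (i.e. `x \ z`) and `rdiv z y` (i.e. `z / y`) satisfying the
residuation law `x * y ≤ z ↔ y ≤ x \ z ↔ x ≤ z / y`. -/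
class ResiduatedLattice (α : Type*) extends Lattice α, Monoid α where
  ldiv : α → α → α
  rdiv : α → α → α
  ldiv_adj : ∀ {x y z : α}, x * y ≤ z ↔ y ≤ ldiv x z
  rdiv_adj : ∀ {x y z : α}, x * y ≤ z ↔ x ≤ rdiv z y

open ResiduatedLattice

variable {α : Type*} [ResiduatedLattice α]

/-- Involution on the full twist structure: `∼(a,b) = (b,a)`. -/
def tneg (p : α × α) : α × α := (p.2, p.1)

/-- Join of the twist structure `L × L^∂`. -/
def tjoin (p q : α × α) : α × α := (p.1 ⊔ q.1, p.2 ⊓ q.2)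

/-- Meet of the twist structure `L × L^∂`. -/
def tmeet (p q : α × α) : α × α := (p.1 ⊓ q.1, p.2 ⊔ q.2)

/-- Order of the twist structure `L × L^∂`. -/
def tle (p q : α × α) : Prop := p.1 ≤ q.1 ∧ q.2 ≤ p.2

/-- Multiplication of the twist structure:
`(a,b)·(a′,b′) = (a·a′, b′/a ∧ a′\b)`. -/
def tmul (p q : α × α) : α × α := (p.1 * q.1, rdiv q.2 p.1 ⊓ ldiv q.1 p.2)

/-- Left division of the twist structure:
`(a,b)\(a′,b′) = (a\a′ ∧ b/b′, b′·a)`. -/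
def tld (p q : α × α) : α × α := (ldiv p.1 q.1 ⊓ rdiv p.2 q.2, q.2 * p.1)

/-- Right division of the twist structure:
`(a′,b′)/(a,b) = (a′/a ∧ b′\b, a·b′)`. -/
def trd (q p : α × α) : α × α := (rdiv q.1 p.1 ⊓ ldiv q.2 p.2, p.1 * q.2)

lemma rl_ldiv_mul_le (x z : α) : x * ldiv x z ≤ z := ldiv_adj.mpr le_rfl
lemma rl_mul_rdiv_le (x z : α) : rdiv z x * x ≤ z := rdiv_adj.mpr le_rfl
lemma rl_mul_le_mul {a b c d : α} (h1 : a ≤ b) (h2 : c ≤ d) : a * c ≤ b * d := by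
  have h3 : b * c ≤ b * d := ldiv_adj.mpr (le_trans h2 (ldiv_adj.mp le_rfl))
  have h4 : a * c ≤ b * c := rdiv_adj.mpr (le_trans h1 (rdiv_adj.mp le_rfl))
  exact le_trans h4 h3
lemma rl_mul_sup (x y z : α) : x * (y ⊔ z) = x * y ⊔ x * z := by
  apply le_antisymm
  · exact ldiv_adj.mpr (sup_le (ldiv_adj.mp le_sup_left) (ldiv_adj.mp le_sup_right))
  · exact sup_le (rl_mul_le_mul le_rfl le_sup_left) (rl_mul_le_mul le_rfl le_sup_right)
lemma rl_sup_mul (x y z : α) : (y ⊔ z) * x = y * x ⊔ z * x := by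
  apply le_antisymm
  · exact rdiv_adj.mpr (sup_le (rdiv_adj.mp le_sup_left) (rdiv_adj.mp le_sup_right))
  · exact sup_le (rl_mul_le_mul le_sup_left le_rfl) (rl_mul_le_mul le_sup_right le_rfl)
lemma rl_rdiv_one (z : α) : rdiv z 1 = z := by
  apply le_antisymm
  · have := rl_mul_rdiv_le 1 z; rwa [mul_one] at this
  · exact rdiv_adj.mp (by rw [mul_one])


/-- A (cyclic) involutive residuated lattice: a residuated lattice with an
involution `∼` satisfying `∼∼x = x` and the contraposition law
`x\∼y = ∼x/y`. -/
class InvResiduatedLattice (β : Type*) extends ResiduatedLattice β where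
  neg : β → β
  neg_neg : ∀ x : β, neg (neg x) = x
  contra : ∀ x y : β, ldiv x (neg y) = rdiv (neg x) y

open InvResiduatedLattice

section Inv
variable {β : Type*} [InvResiduatedLattice β]

lemma nneg (x : β) : neg (neg x) = x := InvResiduatedLattice.neg_neg x

lemma inv_neg_eq_ldiv (x : β) : neg x = ldiv x (neg 1) := by
  rw [contra, rl_rdiv_one]

lemma inv_neg_antitone {x y : β} (h : x ≤ y) : neg y ≤ neg x := by
  rw [inv_neg_eq_ldiv y, inv_neg_eq_ldiv x]
  exact ldiv_adj.mp (le_trans (rl_mul_le_mul h le_rfl) (rl_ldiv_mul_le y (neg 1)))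

lemma inv_rot1 {x y z : β} : x * y ≤ z ↔ y * neg z ≤ neg x := by
  rw [ldiv_adj, show ldiv x z = rdiv (neg x) (neg z) by rw [← contra, nneg], ← rdiv_adj]

lemma inv_rot2 {x y z : β} : x * y ≤ z ↔ neg z * x ≤ neg y := by
  rw [rdiv_adj, show rdiv z y = ldiv (neg z) (neg y) by rw [contra, nneg], ← ldiv_adj]

lemma inv_mul_neg_self (x : β) : x * neg x ≤ neg 1 := by
  have h := inv_rot2.mp (le_of_eq (mul_one (neg x)))
  rwa [nneg] at h

lemma inv_neg_mul_self (x : β) : neg x * x ≤ neg 1 := by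
  have h := inv_rot1.mp (le_of_eq (one_mul (neg x)))
  rwa [nneg] at h

lemma inv_le_neg_iff {x y : β} : x ≤ neg y ↔ y ≤ neg x := by
  constructor
  · intro h; have := inv_neg_antitone h; rwa [nneg] at this
  · intro h; have := inv_neg_antitone h; rwa [nneg] at this

lemma inv_le_iff_mul_neg {x y : β} : x ≤ y ↔ x * neg y ≤ neg 1 := by
  constructor
  · intro h; exact le_trans (rl_mul_le_mul h le_rfl) (inv_mul_neg_self y)
  · intro h
    have h2 := inv_rot1.mp h
    rw [nneg, mul_one] at h2
    have := inv_neg_antitone h2; rwa [nneg, nneg] at this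

lemma inv_neg_mul_eq_ldiv (x y : β) : neg (x * y) = ldiv y (neg x) := by
  apply le_antisymm
  · exact ldiv_adj.mp (inv_rot1.mp le_rfl)
  · apply inv_le_neg_iff.mp
    apply inv_rot1.mpr
    rw [nneg]
    exact rl_ldiv_mul_le y (neg x)

lemma inv_neg_mul_eq_rdiv (x y : β) : neg (x * y) = rdiv (neg y) x := by
  apply le_antisymm
  · exact rdiv_adj.mp (inv_rot2.mp le_rfl)
  · apply inv_le_neg_iff.mp
    apply inv_rot2.mpr
    rw [nneg]
    exact rl_mul_rdiv_le x (neg y)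

lemma inv_neg_sup (x y : β) : neg (x ⊔ y) = neg x ⊓ neg y := by
  apply le_antisymm
  · exact le_inf (inv_neg_antitone le_sup_left) (inv_neg_antitone le_sup_right)
  · apply inv_le_neg_iff.mp
    exact sup_le (inv_le_neg_iff.mp inf_le_left) (inv_le_neg_iff.mp inf_le_right)

lemma inv_neg_inf (x y : β) : neg (x ⊓ y) = neg x ⊔ neg y := by
  apply le_antisymm
  · have h : neg (neg x ⊔ neg y) ≤ x ⊓ y := by
      refine le_inf ?_ ?_
      · have := inv_neg_antitone (le_sup_left : neg x ≤ neg x ⊔ neg y)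
        rwa [nneg] at this
      · have := inv_neg_antitone (le_sup_right : neg y ≤ neg x ⊔ neg y)
        rwa [nneg] at this
    have := inv_neg_antitone h; rwa [nneg] at this
  · exact sup_le (inv_neg_antitone inf_le_left) (inv_neg_antitone inf_le_right)

end Inv


/-- A conucleus on a residuated lattice (conditions (C1)-(C5)). -/
def IsConucleus {β : Type*} [Lattice β] [Monoid β] (τ : β → β) : Prop :=
  (∀ x, τ x ≤ x) ∧ (∀ x, τ (τ x) = τ x) ∧ (∀ x y, x ≤ y → τ x ≤ τ y) ∧
  (∀ x y, τ x * τ y ≤ τ (x * y)) ∧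
  (∀ x, τ 1 * τ x = τ x) ∧ (∀ x, τ x * τ 1 = τ x)

/-- A Nelson conucleus: a conucleus additionally satisfying
(T1) `τ(x∨y) = τx ∨ τy`, (T2) `τ(x·y) = τx·τy`, and
(T3) `x·y ≤ τx·y ∨ x·τy`. -/
def IsNelsonConucleus {β : Type*} [Lattice β] [Monoid β] (τ : β → β) : Prop :=
  IsConucleus τ ∧
  (∀ x y, τ (x ⊔ y) = τ x ⊔ τ y) ∧
  (∀ x y, τ (x * y) = τ x * τ y) ∧
  (∀ x y, x * y ≤ τ x * y ⊔ x * τ y)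

section Conv
variable {β : Type*} [InvResiduatedLattice β] {τ : β → β}

-- D5 : Brouwerian property
lemma cD5 (hN : IsNelsonConucleus τ) (hid : ∀ x, τ x * τ x = τ x)
    (hle : ∀ x, τ x ≤ 1) (x y : β) : τ x * τ y = τ (τ x ⊓ τ y) := by
  obtain ⟨⟨defl, idem, mono, -, -, -⟩, T1, T2, T3⟩ := hN
  apply le_antisymm
  · have h1 : τ x * τ y = τ (τ x * τ y) := by rw [T2, idem, idem]
    have h2 : τ x * τ y ≤ τ x ⊓ τ y := le_inf
      (le_trans (rl_mul_le_mul le_rfl (hle y)) (le_of_eq (mul_one _)))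
      (le_trans (rl_mul_le_mul (hle x) le_rfl) (le_of_eq (one_mul _)))
    rw [h1]; exact mono _ _ h2
  · rw [← hid (τ x ⊓ τ y)]
    exact rl_mul_le_mul (le_trans (mono _ _ inf_le_left) (le_of_eq (idem x)))
      (le_trans (mono _ _ inf_le_right) (le_of_eq (idem y)))

-- D4 : images commute
lemma cD4 (hN : IsNelsonConucleus τ) (hid : ∀ x, τ x * τ x = τ x)
    (hle : ∀ x, τ x ≤ 1) (x y : β) : τ x * τ y = τ y * τ x := by
  rw [cD5 hN hid hle, cD5 hN hid hle, inf_comm]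

-- D6
lemma cD6 (hN : IsNelsonConucleus τ) (p q : β) : τ (p ⊓ q) = τ (τ p ⊓ τ q) := by
  obtain ⟨⟨defl, idem, mono, -, -, -⟩, -, -, -⟩ := hN
  apply le_antisymm
  · have h : τ (p ⊓ q) ≤ τ p ⊓ τ q :=
      le_inf (mono _ _ inf_le_left) (mono _ _ inf_le_right)
    rw [← idem (p ⊓ q)]; exact mono _ _ h
  · exact mono _ _ (le_inf (le_trans inf_le_left (defl p)) (le_trans inf_le_right (defl q)))

-- D7 : swap lemma for τ-fixed elements
lemma cD7 (hN : IsNelsonConucleus τ) (hid : ∀ x, τ x * τ x = τ x)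
    (hle : ∀ x, τ x ≤ 1) (u w : β) : τ (ldiv (τ u) w) = τ (rdiv w (τ u)) := by
  have defl := hN.1.1
  have idem := hN.1.2.1
  have mono := hN.1.2.2.1
  apply le_antisymm
  · have hs : τ (ldiv (τ u) w) * τ u ≤ w := by
      rw [cD4 hN hid hle]
      calc τ u * τ (ldiv (τ u) w) ≤ τ u * ldiv (τ u) w :=
            rl_mul_le_mul le_rfl (defl _)
        _ ≤ w := rl_ldiv_mul_le _ _
    have h2 : τ (ldiv (τ u) w) ≤ rdiv w (τ u) := rdiv_adj.mp hs
    rw [← idem (ldiv (τ u) w)]; exact mono _ _ h2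
  · have hs : τ u * τ (rdiv w (τ u)) ≤ w := by
      rw [← cD4 hN hid hle]
      calc τ (rdiv w (τ u)) * τ u ≤ rdiv w (τ u) * τ u :=
            rl_mul_le_mul (defl _) le_rfl
        _ ≤ w := rl_mul_rdiv_le _ _
    have h2 : τ (rdiv w (τ u)) ≤ ldiv (τ u) w := ldiv_adj.mp hs
    rw [← idem (rdiv w (τ u))]; exact mono _ _ h2

-- D8 : order reflection
lemma cD8 (hN : IsNelsonConucleus τ) {x y : β}
    (h1 : τ x ≤ τ y) (h2 : τ (neg y) ≤ τ (neg x)) : x ≤ y := by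
  have defl := hN.1.1
  have T3 := hN.2.2.2
  have key : x * neg y ≤ neg 1 := by
    refine le_trans (T3 x (neg y)) (sup_le ?_ ?_)
    · exact le_trans (rl_mul_le_mul (le_trans h1 (defl y)) le_rfl) (inv_mul_neg_self y)
    · exact le_trans (rl_mul_le_mul le_rfl (le_trans h2 (defl (neg x)))) (inv_mul_neg_self x)
  exact inv_le_iff_mul_neg.mpr key

-- Step A : v * τu ≤ w → τu * v ≤ w
lemma cStepA (hN : IsNelsonConucleus τ) (hid : ∀ x, τ x * τ x = τ x)
    (hle : ∀ x, τ x ≤ 1) {u v w : β} (h : v * τ u ≤ w) : τ u * v ≤ w := by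
  have idem := hN.1.2.1
  have mono := hN.1.2.2.1
  have T2 := hN.2.2.1
  apply cD8 hN
  · have e : τ (τ u * v) = τ (v * τ u) := by
      rw [T2, T2, idem, cD4 hN hid hle]
    rw [e]; exact mono _ _ h
  · have e1 : neg (v * τ u) = ldiv (τ u) (neg v) := inv_neg_mul_eq_ldiv v (τ u)
    have e2 : neg (τ u * v) = rdiv (neg v) (τ u) := inv_neg_mul_eq_rdiv (τ u) v
    have h3 : neg w ≤ ldiv (τ u) (neg v) := e1 ▸ inv_neg_antitone h
    calc τ (neg w) ≤ τ (ldiv (τ u) (neg v)) := mono _ _ h3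
      _ = τ (rdiv (neg v) (τ u)) := cD7 hN hid hle u (neg v)
      _ = τ (neg (τ u * v)) := by rw [e2]

-- Step A' : τu * v ≤ w → v * τu ≤ w
lemma cStepA' (hN : IsNelsonConucleus τ) (hid : ∀ x, τ x * τ x = τ x)
    (hle : ∀ x, τ x ≤ 1) {u v w : β} (h : τ u * v ≤ w) : v * τ u ≤ w := by
  have idem := hN.1.2.1
  have mono := hN.1.2.2.1
  have T2 := hN.2.2.1
  apply cD8 hN
  · have e : τ (v * τ u) = τ (τ u * v) := by
      rw [T2, T2, idem, cD4 hN hid hle]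
    rw [e]; exact mono _ _ h
  · have e1 : neg (τ u * v) = rdiv (neg v) (τ u) := inv_neg_mul_eq_rdiv (τ u) v
    have e2 : neg (v * τ u) = ldiv (τ u) (neg v) := inv_neg_mul_eq_ldiv v (τ u)
    have h3 : neg w ≤ rdiv (neg v) (τ u) := e1 ▸ inv_neg_antitone h
    calc τ (neg w) ≤ τ (rdiv (neg v) (τ u)) := mono _ _ h3
      _ = τ (ldiv (τ u) (neg v)) := (cD7 hN hid hle u (neg v)).symm
      _ = τ (neg (v * τ u)) := by rw [e2]

-- centrality
lemma cCentral (hN : IsNelsonConucleus τ) (hid : ∀ x, τ x * τ x = τ x)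
    (hle : ∀ x, τ x ≤ 1) (u v : β) : τ u * v = v * τ u :=
  le_antisymm (cStepA hN hid hle le_rfl) (cStepA' hN hid hle le_rfl)

-- N1 as equality
lemma cN1 (hN : IsNelsonConucleus τ) (x y : β) :
    x * y = τ x * y ⊔ x * τ y := by
  have defl := hN.1.1
  exact le_antisymm (hN.2.2.2 x y)
    (sup_le (rl_mul_le_mul (defl x) le_rfl) (rl_mul_le_mul le_rfl (defl y)))

-- commutativity
lemma cComm (hN : IsNelsonConucleus τ) (hid : ∀ x, τ x * τ x = τ x)
    (hle : ∀ x, τ x ≤ 1) (x y : β) : x * y = y * x := by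
  rw [cN1 hN x y, cN1 hN y x, cCentral hN hid hle x y, cCentral hN hid hle y x, sup_comm]

-- τ x = (x ⊓ 1)²
lemma cClaim1 (hN : IsNelsonConucleus τ) (hid : ∀ x, τ x * τ x = τ x)
    (hle : ∀ x, τ x ≤ 1) (x : β) : τ x = (x ⊓ 1) * (x ⊓ 1) := by
  have defl := hN.1.1
  have idem := hN.1.2.1
  have mono := hN.1.2.2.1
  have T3 := hN.2.2.2
  have h3 : τ x = τ (x ⊓ 1) := by
    apply le_antisymm
    · rw [← idem x]; exact mono _ _ (le_inf (defl x) (hle x))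
    · exact mono _ _ inf_le_left
  have ha : (x ⊓ 1 : β) ≤ 1 := inf_le_right
  have h2 : τ (x ⊓ 1) = (x ⊓ 1) * (x ⊓ 1) := by
    apply le_antisymm
    · rw [← hid (x ⊓ 1)]; exact rl_mul_le_mul (defl _) (defl _)
    · refine le_trans (T3 (x ⊓ 1) (x ⊓ 1)) (sup_le ?_ ?_)
      · exact le_trans (rl_mul_le_mul le_rfl ha) (le_of_eq (mul_one _))
      · exact le_trans (rl_mul_le_mul ha le_rfl) (le_of_eq (one_mul _))
  rw [h3, h2]

-- distributivity
lemma cDistrib (hN : IsNelsonConucleus τ) (hid : ∀ x, τ x * τ x = τ x)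
    (hle : ∀ x, τ x ≤ 1) (x y z : β) : x ⊓ (y ⊔ z) = (x ⊓ y) ⊔ (x ⊓ z) := by
  have mono := hN.1.2.2.1
  have T1 := hN.2.1
  apply le_antisymm
  · apply cD8 hN
    · -- τ of both sides agree
      have hL : τ (x ⊓ (y ⊔ z)) = τ ((x ⊓ y) ⊔ (x ⊓ z)) := by
        rw [cD6 hN x (y ⊔ z), ← cD5 hN hid hle, T1, rl_mul_sup,
          cD5 hN hid hle x y, cD5 hN hid hle x z, ← cD6 hN x y, ← cD6 hN x z, ← T1]
      exact le_of_eq hL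
    · -- negated side
      rw [inv_neg_sup, inv_neg_inf, inv_neg_inf, inv_neg_inf, inv_neg_sup]
      set p := neg x
      set q := neg y
      set r := neg z
      -- goal : τ ((p ⊔ q) ⊓ (p ⊔ r)) ≤ τ (p ⊔ q ⊓ r)
      have e : τ ((p ⊔ q) ⊓ (p ⊔ r)) =
          (τ p * τ p ⊔ τ p * τ r) ⊔ (τ q * τ p ⊔ τ q * τ r) := by
        rw [cD6 hN, ← cD5 hN hid hle, T1, T1, rl_sup_mul, rl_mul_sup, rl_mul_sup]
      rw [e]
      have hp : τ p ≤ τ (p ⊔ q ⊓ r) := mono _ _ le_sup_left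
      refine sup_le (sup_le ?_ ?_) (sup_le ?_ ?_)
      · rw [hid p]; exact hp
      · exact le_trans (le_trans (rl_mul_le_mul le_rfl (hle r)) (le_of_eq (mul_one _))) hp
      · exact le_trans (le_trans (rl_mul_le_mul (hle q) le_rfl) (le_of_eq (one_mul _))) hp
      · rw [cD5 hN hid hle, ← cD6 hN]; exact mono _ _ le_sup_right
  · exact sup_le (le_inf inf_le_left (le_trans inf_le_right le_sup_left))
      (le_inf inf_le_left (le_trans inf_le_right le_sup_right))

end Conv


/-- if `A` is a Nelson-type algebra (a commutative,
distributive involutive residuated lattice satisfying (N1) and (N2)), then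
`τ(x) = (x∧e)²` is a Nelson conucleus on `A`. Conversely, if `A` is an
involutive residuated lattice and `τ` is a Nelson conucleus on `A` with
`τ(x)² = τ(x) ≤ e` for all `x`, then `τ(x) = (x∧e)²` and `A` is a
Nelson-type algebra: `A` is commutative, distributive, satisfies (N1) and
(N2), and the conucleus image `A_τ` is a Brouwerian algebra, i.e. an
integral residuated lattice in which `·` and `∧_τ` coincide. -/
theorem nelson_type_iff_nelson_conucleus {α : Type*} [InvResiduatedLattice α] :
    -- forward direction
    ((∀ x y : α, x * y = y * x) →
     (∀ x y z : α, x ⊓ (y ⊔ z) = (x ⊓ y) ⊔ (x ⊓ z)) →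
     (∀ x y : α, x * y = ((x ⊓ 1) * (x ⊓ 1)) * y ⊔ x * ((y ⊓ 1) * (y ⊓ 1))) →
     (∀ x y : α, ((x * y) ⊓ 1) * ((x * y) ⊓ 1) = ((x ⊓ 1) * (x ⊓ 1)) * ((y ⊓ 1) * (y ⊓ 1))) →
     IsNelsonConucleus (fun x : α => (x ⊓ 1) * (x ⊓ 1))) ∧
    -- converse direction
    (∀ τ : α → α, IsNelsonConucleus τ →
     (∀ x : α, τ x * τ x = τ x) → (∀ x : α, τ x ≤ 1) →
     (∀ x : α, τ x = (x ⊓ 1) * (x ⊓ 1)) ∧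
     (∀ x y : α, x * y = y * x) ∧
     (∀ x y z : α, x ⊓ (y ⊔ z) = (x ⊓ y) ⊔ (x ⊓ z)) ∧
     (∀ x y : α, x * y = ((x ⊓ 1) * (x ⊓ 1)) * y ⊔ x * ((y ⊓ 1) * (y ⊓ 1))) ∧
     (∀ x y : α, ((x * y) ⊓ 1) * ((x * y) ⊓ 1) = ((x ⊓ 1) * (x ⊓ 1)) * ((y ⊓ 1) * (y ⊓ 1))) ∧
     (∀ x y : α, τ x * τ y = τ (τ x ⊓ τ y))) := by
  constructor
  · -- forward direction
    intro hcomm hdist hN1 hN2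
    have hle1 : ∀ x : α, (x ⊓ 1) * (x ⊓ 1) ≤ 1 := fun x =>
      le_trans (rl_mul_le_mul inf_le_right inf_le_right) (le_of_eq (one_mul 1))
    have hsq : ∀ a : α, a ≤ 1 → a * a = (a * a) * a := by
      intro a ha
      have h := hN1 a a
      rw [inf_eq_left.mpr ha] at h
      rw [hcomm a (a * a), sup_idem] at h
      exact h
    have hidem4 : ∀ a : α, a ≤ 1 → (a * a) * (a * a) = a * a := by
      intro a ha
      have h := hsq a ha
      calc (a * a) * (a * a) = ((a * a) * a) * a := (mul_assoc (a * a) a a).symm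
        _ = a * a := by rw [← h, ← h]
    refine ⟨⟨?_, ?_, ?_, ?_, ?_, ?_⟩, ?_, ?_, ?_⟩
    · intro x
      exact le_trans (rl_mul_le_mul inf_le_left inf_le_right) (le_of_eq (mul_one x))
    · intro x
      dsimp only
      rw [inf_eq_left.mpr (hle1 x)]
      exact hidem4 (x ⊓ 1) inf_le_right
    · intro x y h
      exact rl_mul_le_mul (inf_le_inf_right 1 h) (inf_le_inf_right 1 h)
    · intro x y
      exact le_of_eq (hN2 x y).symm
    · intro x
      dsimp only
      rw [inf_idem, one_mul, one_mul]
    · intro x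
      dsimp only
      rw [inf_idem, one_mul, mul_one]
    · -- T1
      intro x y
      dsimp only
      have h0 : (x ⊔ y) ⊓ 1 = (x ⊓ 1) ⊔ (y ⊓ 1) := by
        rw [inf_comm (x ⊔ y) 1, hdist 1 x y, inf_comm 1 x, inf_comm 1 y]
      rw [h0]
      have ha : (x ⊓ 1 : α) ≤ 1 := inf_le_right
      have hb : (y ⊓ 1 : α) ≤ 1 := inf_le_right
      set a := x ⊓ 1
      set b := y ⊓ 1
      apply le_antisymm
      · rw [rl_sup_mul, rl_mul_sup, rl_mul_sup]
        have hab : a * b ≤ a * a ⊔ b * b := by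
          have h := hN1 a b
          rw [inf_eq_left.mpr ha, inf_eq_left.mpr hb] at h
          rw [h]
          refine sup_le ?_ ?_
          · exact le_trans (rl_mul_le_mul le_rfl hb)
              (le_trans (le_of_eq (mul_one _)) le_sup_left)
          · exact le_trans (rl_mul_le_mul ha le_rfl)
              (le_trans (le_of_eq (one_mul _)) le_sup_right)
        refine sup_le (sup_le le_sup_left hab) (sup_le ?_ le_sup_right)
        rw [hcomm b a]; exact hab
      · exact sup_le (rl_mul_le_mul le_sup_left le_sup_left)
          (rl_mul_le_mul le_sup_right le_sup_right)
    · intro x y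
      exact hN2 x y
    · intro x y
      exact le_of_eq (hN1 x y)
  · -- converse direction
    intro τ hN hid hle
    refine ⟨cClaim1 hN hid hle, cComm hN hid hle, cDistrib hN hid hle, ?_, ?_, cD5 hN hid hle⟩
    · intro x y
      rw [← cClaim1 hN hid hle x, ← cClaim1 hN hid hle y]
      exact cN1 hN x y
    · intro x y
      rw [← cClaim1 hN hid hle x, ← cClaim1 hN hid hle y, ← cClaim1 hN hid hle (x * y)]
      exact hN.2.2.1 x y
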